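/- Let u : [0,T]×ℝⁿ → U be a measurable feedback and μ₀ a finite Borel measure on X (the initial measure). Suppose that for μ₀-almost every x₀ ∈ X, x(·|x₀) is a solution with control u satisfying x(0|x₀) = x₀ and x(t|x₀) ∈ X for all t ∈ [0,T], and that (t,x₀) ↦ x(t|x₀) is jointly Borel measurable. Define the final measure μ_T as the pushforward of μ₀ under x₀ ↦ x(T|x₀), and the average occupation measure μ on [0,T]×X by μ(A) = ∫_X μ_{x₀}(A) dμ₀(x₀), where μ_{x₀} is the pushforward of Lebesgue measure on [0,T] under t ↦ (t, x(t|x₀)). Then Liouville's equation holds: for every v ∈ C¹([0,T]×ℝⁿ), ∫ v(T,y) dμ_T(y) = ∫ v(0,x₀) dμ₀(x₀) + ∫_{[0,T]×X} [ (L_f v)(t,y) + Σ_{j=1}^m [L_g v]_j(t,y) u_j(t,y) ] dμ(t,y). -/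

import Mathlib

/-!
Along a trajectory, `t ↦ (t, x(t|x₀))` is absolutely continuous with a.e. derivative
`(1, f + g u)`, and `v` is Lipschitz on its compact image, so `t ↦ v (t, x(t|x₀))` is absolutely
continuous with a.e. derivative `L_f v + Σ_j [L_g v]_j u_j`. The fundamental theorem of calculus
for absolutely continuous functions then gives
`v(T, x(T|x₀)) - v(0, x₀) = ∫₀ᵀ (L_f v + Σ_j [L_g v]_j u_j)(t, x(t|x₀)) dt`.
Integrating in `x₀` against `μ₀` yields Liouville's equation: the average occupation measure is the
pushforward of `μ₀ ⊗ Leb|[0,T]` under `(x₀, t) ↦ (t, x(t|x₀))`, so Fubini applies, and every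
integrand is bounded because the trajectories stay in the compact set `[0,T] × X`.
-/

open MeasureTheory Set Filter

noncomputable section

/-- The operator `L_f v (t,x) = ∂v/∂t (t,x) + ∑ i, ∂v/∂x_i (t,x) * f_i (t,x)`,
expressed as the Fréchet derivative of `v` at `(t,x)` applied to `(1, f (t,x))`. -/
def Lf (n : ℕ) (f : ℝ × (Fin n → ℝ) → Fin n → ℝ)
    (v : ℝ × (Fin n → ℝ) → ℝ) : ℝ × (Fin n → ℝ) → ℝ :=
  fun q => fderiv ℝ v q (1, f q)

/-- The operator `[L_g v]_j (t,x) = ∑ i, ∂v/∂x_i (t,x) * g_{ij} (t,x)`. -/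
def Lg (n m : ℕ) (g : ℝ × (Fin n → ℝ) → Fin n → Fin m → ℝ)
    (v : ℝ × (Fin n → ℝ) → ℝ) : ℝ × (Fin n → ℝ) → Fin m → ℝ :=
  fun q j => fderiv ℝ v q (0, fun i => g q i j)

/-- A Carathéodory solution of `ẋ = f(t,x) + g(t,x) u(t,x)` on `[0,T]`: an absolutely
continuous curve satisfying the corresponding integral equation. -/
def IsSolution (n m : ℕ) (T : ℝ) (f : ℝ × (Fin n → ℝ) → Fin n → ℝ)
    (g : ℝ × (Fin n → ℝ) → Fin n → Fin m → ℝ)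
    (u : ℝ × (Fin n → ℝ) → Fin m → ℝ) (x : ℝ → Fin n → ℝ) : Prop :=
  ContinuousOn x (Icc 0 T) ∧
  IntervalIntegrable
    (fun s => (fun i => f (s, x s) i + ∑ j, g (s, x s) i j * u (s, x s) j)) volume 0 T ∧
  ∀ t ∈ Icc (0:ℝ) T,
    x t = x 0 + ∫ s in (0:ℝ)..t, (fun i => f (s, x s) i + ∑ j, g (s, x s) i j * u (s, x s) j)



namespace AbsolutelyContinuousOnInterval

variable {X Y : Type*} [PseudoMetricSpace X] [PseudoMetricSpace Y] {a b : ℝ}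

theorem of_dist_le_mul {f : ℝ → X} {g : ℝ → Y} {K : ℝ}
    (hg : AbsolutelyContinuousOnInterval g a b)
    (hfg : ∀ s ∈ uIcc a b, ∀ t ∈ uIcc a b, dist (f s) (f t) ≤ K * dist (g s) (g t)) :
    AbsolutelyContinuousOnInterval f a b := by
  unfold AbsolutelyContinuousOnInterval at hg ⊢
  refine squeeze_zero' (Eventually.of_forall fun _ ↦ Finset.sum_nonneg fun _ _ ↦ dist_nonneg)
    ?_ (by simpa using hg.const_mul K)
  rw [eventually_inf_principal]
  filter_upwards with E hE
  rw [Finset.mul_sum]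
  exact Finset.sum_le_sum fun i hi ↦ hfg _ (hE.1 i hi).1 _ (hE.1 i hi).2

theorem _root_.LipschitzOnWith.comp_absolutelyContinuousOnInterval {f : X → Y} {K : NNReal}
    {s : Set X} {g : ℝ → X} (hf : LipschitzOnWith K f s)
    (hg : AbsolutelyContinuousOnInterval g a b) (hgs : MapsTo g (uIcc a b) s) :
    AbsolutelyContinuousOnInterval (f ∘ g) a b :=
  hg.of_dist_le_mul fun _ hx _ hy ↦ hf.dist_le_mul _ (hgs hx) _ (hgs hy)

end AbsolutelyContinuousOnInterval

section ChainRule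

variable {E : Type*} [NormedAddCommGroup E] [NormedSpace ℝ E]

theorem IntervalIntegrable.absolutelyContinuousOnInterval_intervalIntegral' {f : ℝ → E}
    {a b c : ℝ} (h : IntervalIntegrable f volume a b) (hc : c ∈ uIcc a b) :
    AbsolutelyContinuousOnInterval (fun x ↦ ∫ v in c..x, f v) a b := by
  refine (h.norm.absolutelyContinuousOnInterval_intervalIntegral hc).of_dist_le_mul (K := 1)
    fun s hs t ht ↦ ?_
  have hsub : ∀ x ∈ uIcc a b, IntervalIntegrable f volume c x := fun x hx ↦
    h.mono_set (uIcc_subset_uIcc hc hx)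
  rw [one_mul, dist_eq_norm, dist_eq_norm, intervalIntegral.integral_interval_sub_left
    (hsub s hs) (hsub t ht), intervalIntegral.integral_interval_sub_left (hsub s hs).norm
    (hsub t ht).norm, Real.norm_eq_abs]
  exact intervalIntegral.norm_integral_le_abs_integral_norm

theorem ContDiff.integral_fderiv_apply_primitive_eq_sub [CompleteSpace E] {v : E → ℝ}
    (hv : ContDiff ℝ 1 v) {Φ : ℝ → E} {a b : ℝ} (hΦ : IntervalIntegrable Φ volume a b) (c : E) :
    ∫ t in a..b, fderiv ℝ v (c + ∫ s in a..t, Φ s) (Φ t) =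
      v (c + ∫ s in a..b, Φ s) - v c := by
  set γ : ℝ → E := fun t ↦ c + ∫ s in a..t, Φ s
  have hγ : AbsolutelyContinuousOnInterval γ a b :=
    (hΦ.absolutelyContinuousOnInterval_intervalIntegral' left_mem_uIcc).of_dist_le_mul (K := 1)
      fun _ _ _ _ ↦ by rw [dist_add_left, one_mul]
  obtain ⟨K, hK⟩ := hv.locallyLipschitz.locallyLipschitzOn.exists_lipschitzOnWith_of_compact
    (isCompact_uIcc.image_of_continuousOn hγ.continuousOn)
  have hvγ := hK.comp_absolutelyContinuousOnInterval hγ (mapsTo_image γ _)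
  have hderiv : ∀ᵐ t, t ∈ uIoc a b → deriv (v ∘ γ) t = fderiv ℝ v (γ t) (Φ t) := by
    filter_upwards [hΦ.ae_hasDerivAt_integral] with t ht htab
    have hγt : HasDerivAt γ (Φ t) t :=
      (ht (uIoc_subset_uIcc htab) a left_mem_uIcc).const_add c
    exact ((hv.differentiable one_ne_zero (γ t)).hasFDerivAt.comp_hasDerivAt t hγt).deriv
  rw [← intervalIntegral.integral_congr_ae hderiv, hvγ.integral_deriv_eq_sub]
  simp [γ]

end ChainRule

section Pair

variable {E F : Type*} [NormedAddCommGroup E] [NormedAddCommGroup F] {f : ℝ → E} {g : ℝ → F}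
  {μ : Measure ℝ} {a b : ℝ}

theorem IntervalIntegrable.prodMk (hf : IntervalIntegrable f μ a b)
    (hg : IntervalIntegrable g μ a b) : IntervalIntegrable (fun x ↦ (f x, g x)) μ a b :=
  ⟨hf.1.prodMk hg.1, hf.2.prodMk hg.2⟩

theorem intervalIntegral.integral_pair [NormedSpace ℝ E] [NormedSpace ℝ F] [CompleteSpace E]
    [CompleteSpace F] (hf : IntervalIntegrable f μ a b) (hg : IntervalIntegrable g μ a b) :
    ∫ x in a..b, (f x, g x) ∂μ = (∫ x in a..b, f x ∂μ, ∫ x in a..b, g x ∂μ) := by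
  simp only [intervalIntegral, _root_.integral_pair hf.1 hg.1, _root_.integral_pair hf.2 hg.2,
    Prod.mk_sub_mk]

end Pair

namespace MeasureTheory.Measure

variable {α β γ : Type*} [MeasurableSpace α] [MeasurableSpace β] [MeasurableSpace γ]
  {μ : Measure α} {ν : Measure β} [SFinite ν] {F : α → β → γ}

theorem bind_map_eq_map_prod (hF : Measurable (Function.uncurry F)) :
    μ.bind (fun a ↦ ν.map (F a)) = (μ.prod ν).map (Function.uncurry F) := by
  have hFa : ∀ a, Measurable (F a) := fun a ↦ hF.comp measurable_prodMk_left
  have hκ : Measurable fun a ↦ ν.map (F a) := by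
    refine measurable_of_measurable_coe _ fun s hs ↦ ?_
    simp_rw [map_apply (hFa _) hs]
    exact measurable_measure_prodMk_left (hF hs)
  ext s hs
  rw [bind_apply hs hκ.aemeasurable, map_apply hF hs, prod_apply (hF hs)]
  refine lintegral_congr fun a ↦ ?_
  rw [map_apply (hFa a) hs]
  rfl

theorem ae_bind_map_of_ae_ae (hF : Measurable (Function.uncurry F)) {p : γ → Prop}
    (hp : MeasurableSet {q | p q}) (h : ∀ᵐ a ∂μ, ∀ᵐ b ∂ν, p (F a b)) :
    ∀ᵐ q ∂(μ.bind fun a ↦ ν.map (F a)), p q := by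
  rw [bind_map_eq_map_prod hF, ae_map_iff hF.aemeasurable hp]
  exact (ae_prod_iff_ae_ae (p := fun z ↦ p (Function.uncurry F z)) (hF hp)).2 h

theorem integrable_bind_map_of_norm_le {E : Type*} [NormedAddCommGroup E] [IsFiniteMeasure μ]
    [IsFiniteMeasure ν] (hF : Measurable (Function.uncurry F)) {h : γ → E}
    (hh : AEStronglyMeasurable h (μ.bind fun a ↦ ν.map (F a))) {K : Set γ}
    (hK : MeasurableSet K) (hFK : ∀ᵐ a ∂μ, ∀ᵐ b ∂ν, F a b ∈ K) {C : ℝ}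
    (hC : ∀ q ∈ K, ‖h q‖ ≤ C) : Integrable h (μ.bind fun a ↦ ν.map (F a)) := by
  have : IsFiniteMeasure (μ.bind fun a ↦ ν.map (F a)) := by
    rw [bind_map_eq_map_prod hF]
    infer_instance
  exact .of_bound hh C ((ae_bind_map_of_ae_ae hF hK hFK).mono hC)

theorem integral_bind_map {E : Type*} [NormedAddCommGroup E] [NormedSpace ℝ E] [SFinite μ]
    (hF : Measurable (Function.uncurry F)) {h : γ → E}
    (hh : AEStronglyMeasurable h (μ.bind fun a ↦ ν.map (F a)))
    (hint : Integrable h (μ.bind fun a ↦ ν.map (F a))) :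
    ∫ q, h q ∂(μ.bind fun a ↦ ν.map (F a)) = ∫ a, ∫ b, h (F a b) ∂ν ∂μ := by
  rw [bind_map_eq_map_prod hF] at hh hint ⊢
  rw [integral_map hF.aemeasurable hh, integral_prod (fun z ↦ h (Function.uncurry F z))
    ((integrable_map_measure hh hF.aemeasurable).1 hint)]
  rfl

end MeasureTheory.Measure

theorem Continuous.integrable_comp_of_ae_mem_isCompact {α β E : Type*} [MeasurableSpace α]
    {μ : Measure α} [IsFiniteMeasure μ] [TopologicalSpace β] [NormedAddCommGroup E] {φ : β → E}
    (hφ : Continuous φ) {K : Set β} (hK : IsCompact K) {p : α → β}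
    (hp : AEStronglyMeasurable p μ) (hpK : ∀ᵐ x ∂μ, p x ∈ K) :
    Integrable (fun x ↦ φ (p x)) μ := by
  obtain ⟨C, hC⟩ := hK.exists_bound_of_continuousOn hφ.continuousOn
  exact .of_bound (hφ.comp_aestronglyMeasurable hp) C (hpK.mono fun x hx ↦ hC _ hx)

section ControlAffine

variable {n m : ℕ} {T : ℝ} {f : ℝ × (Fin n → ℝ) → Fin n → ℝ}
  {g : ℝ × (Fin n → ℝ) → Fin n → Fin m → ℝ} {u : ℝ × (Fin n → ℝ) → Fin m → ℝ}
  {v : ℝ × (Fin n → ℝ) → ℝ}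

theorem Lf_add_sum_Lg_mul (q : ℝ × (Fin n → ℝ)) (w : Fin m → ℝ) :
    Lf n f v q + ∑ j, Lg n m g v q j * w j =
      fderiv ℝ v q (1, fun i ↦ f q i + ∑ j, g q i j * w j) := by
  have hsplit : ((1 : ℝ), fun i ↦ f q i + ∑ j, g q i j * w j) =
      ((1 : ℝ), f q) + ∑ j, w j • ((0 : ℝ), fun i ↦ g q i j) := by
    ext i <;> simp [Prod.fst_sum, Prod.snd_sum, Finset.sum_apply, mul_comm]
  rw [hsplit, map_add, map_sum]
  simp only [map_smul, smul_eq_mul, Lf, Lg, mul_comm]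

theorem IsSolution.graph_eq_add_intervalIntegral {x : ℝ → Fin n → ℝ}
    (hx : IsSolution n m T f g u x) {t : ℝ} (ht : t ∈ Icc 0 T) :
    (t, x t) = ((0 : ℝ), x 0) + ∫ s in (0 : ℝ)..t,
      ((1 : ℝ), fun i ↦ f (s, x s) i + ∑ j, g (s, x s) i j * u (s, x s) j) := by
  obtain ⟨-, hF, hx⟩ := hx
  have hFt := hF.mono_set (uIcc_subset_uIcc left_mem_uIcc (mem_uIcc_of_le ht.1 ht.2))
  rw [intervalIntegral.integral_pair intervalIntegrable_const hFt, hx t ht]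
  simp

theorem IsSolution.integral_Lf_add_sum_Lg_mul_eq_sub {x : ℝ → Fin n → ℝ}
    (hx : IsSolution n m T f g u x) (hT : 0 ≤ T) (hv : ContDiff ℝ 1 v) :
    ∫ t in Icc 0 T, (Lf n f v (t, x t) + ∑ j, Lg n m g v (t, x t) j * u (t, x t) j) =
      v (T, x T) - v (0, x 0) := by
  rw [integral_Icc_eq_integral_Ioc, ← intervalIntegral.integral_of_le hT,
    hx.graph_eq_add_intervalIntegral ⟨hT, le_rfl⟩, ← hv.integral_fderiv_apply_primitive_eq_sub
    (intervalIntegrable_const.prodMk hx.2.1)]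
  refine intervalIntegral.integral_congr fun t ht ↦ ?_
  rw [uIcc_of_le hT] at ht
  simp only [← hx.graph_eq_add_intervalIntegral ht, Lf_add_sum_Lg_mul]

theorem continuous_Lf (hv : ContDiff ℝ 1 v) (hf : Continuous f) : Continuous (Lf n f v) :=
  (hv.continuous_fderiv one_ne_zero).clm_apply (continuous_const.prodMk hf)

theorem continuous_Lg (hv : ContDiff ℝ 1 v) (hg : Continuous g) (j : Fin m) :
    Continuous fun q ↦ Lg n m g v q j :=
  (hv.continuous_fderiv one_ne_zero).clm_apply
    (continuous_const.prodMk (continuous_pi fun i ↦ (continuous_apply j).comp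
      ((continuous_apply i).comp hg)))

theorem measurable_Lf_add_sum_Lg_mul (hv : ContDiff ℝ 1 v) (hf : Continuous f)
    (hg : Continuous g) (hu : Measurable u) :
    Measurable fun q ↦ Lf n f v q + ∑ j, Lg n m g v q j * u q j :=
  (continuous_Lf hv hf).measurable.add <| Finset.measurable_sum _ fun j _ ↦
    (continuous_Lg hv hg j).measurable.mul ((measurable_pi_apply j).comp hu)

theorem IsCompact.exists_bound_Lf_add_sum_Lg_mul {K : Set (ℝ × (Fin n → ℝ))} (hK : IsCompact K)
    (hv : ContDiff ℝ 1 v) (hf : Continuous f) (hg : Continuous g)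
    (huU : ∀ q j, u q j ∈ Icc (-1 : ℝ) 1) :
    ∃ C, ∀ q ∈ K, ‖Lf n f v q + ∑ j, Lg n m g v q j * u q j‖ ≤ C := by
  obtain ⟨C, hC⟩ := hK.exists_bound_of_continuousOn <| Continuous.continuousOn (f :=
    fun q ↦ |Lf n f v q| + ∑ j, |Lg n m g v q j|)
    ((continuous_Lf hv hf).abs.add (continuous_finsetSum _ fun j _ ↦ (continuous_Lg hv hg j).abs))
  refine ⟨C, fun q hq ↦ le_trans ?_ ((le_abs_self _).trans (hC q hq))⟩
  rw [Real.norm_eq_abs]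
  refine (abs_add_le _ _).trans (add_le_add le_rfl ((Finset.abs_sum_le_sum_abs _ _).trans
    (Finset.sum_le_sum fun j _ ↦ ?_)))
  rw [abs_mul]
  exact mul_le_of_le_one_right (abs_nonneg _) (abs_le.2 (huU q j))

end ControlAffine

theorem liouville_equation_of_trajectory_family
    (n m : ℕ) (T : ℝ) (hT : 0 < T)
    (f : ℝ × (Fin n → ℝ) → Fin n → ℝ) (g : ℝ × (Fin n → ℝ) → Fin n → Fin m → ℝ)
    (hf : Continuous f) (hg : Continuous g)
    (X : Set (Fin n → ℝ)) (hX : IsCompact X)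
    (u : ℝ × (Fin n → ℝ) → Fin m → ℝ) (hu : Measurable u)
    (huU : ∀ q j, u q j ∈ Icc (-1:ℝ) 1)
    -- the initial measure, a finite Borel measure supported on `X`
    (μ₀ : Measure (Fin n → ℝ)) [IsFiniteMeasure μ₀] (hμ₀X : μ₀ Xᶜ = 0)
    -- the family of trajectories `x(·|x₀)`
    (traj : (Fin n → ℝ) → ℝ → (Fin n → ℝ))
    (htrajmeas : Measurable (fun q : ℝ × (Fin n → ℝ) => traj q.2 q.1))
    (htraj : ∀ᵐ x₀ ∂μ₀, IsSolution n m T f g u (traj x₀) ∧ traj x₀ 0 = x₀ ∧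
      ∀ t ∈ Icc (0:ℝ) T, traj x₀ t ∈ X)
    -- the final measure: pushforward of `μ₀` under `x₀ ↦ x(T|x₀)`
    (μT : Measure (Fin n → ℝ)) (hμT : μT = Measure.map (fun x₀ => traj x₀ T) μ₀)
    -- the average occupation measure: `μ(A) = ∫ μ_{x₀}(A) dμ₀(x₀)` where `μ_{x₀}` is the
    -- pushforward of Lebesgue measure on `[0,T]` under `t ↦ (t, x(t|x₀))`
    (μ : Measure (ℝ × (Fin n → ℝ)))
    (hμ : μ = μ₀.bind (fun x₀ =>
      Measure.map (fun t => (t, traj x₀ t)) (volume.restrict (Icc (0:ℝ) T)))) :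
    ∀ v : ℝ × (Fin n → ℝ) → ℝ, ContDiff ℝ 1 v →
      ∫ y, v (T, y) ∂μT = (∫ y, v (0, y) ∂μ₀) +
        ∫ q, (Lf n f v q + ∑ j, Lg n m g v q j * u q j) ∂μ := by
  intro v hv
  subst hμ hμT
  have hT' : T ∈ Icc 0 T := ⟨hT.le, le_rfl⟩
  have hK : IsCompact (Icc (0 : ℝ) T ×ˢ X) := isCompact_Icc.prod hX
  have hF : Measurable fun p : (Fin n → ℝ) × ℝ ↦ (p.2, traj p.1 p.2) :=
    measurable_snd.prodMk (htrajmeas.comp measurable_swap)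
  have hFT : Measurable fun x₀ ↦ traj x₀ T :=
    htrajmeas.comp (measurable_const.prodMk measurable_id)
  have hvT : Integrable (fun x₀ ↦ v (T, traj x₀ T)) μ₀ :=
    hv.continuous.integrable_comp_of_ae_mem_isCompact hK
      (measurable_const.prodMk hFT).aestronglyMeasurable
      (htraj.mono fun x₀ hx₀ ↦ ⟨hT', hx₀.2.2 T hT'⟩)
  have hv0 : Integrable (fun x₀ ↦ v (0, x₀)) μ₀ :=
    hv.continuous.integrable_comp_of_ae_mem_isCompact hK
      (measurable_const.prodMk measurable_id).aestronglyMeasurable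
      ((measure_eq_zero_iff_ae_notMem.1 hμ₀X).mono fun x₀ hx₀ ↦
        ⟨⟨le_rfl, hT.le⟩, not_not.1 hx₀⟩)
  have hH := measurable_Lf_add_sum_Lg_mul hv hf hg hu
  obtain ⟨C, hC⟩ := hK.exists_bound_Lf_add_sum_Lg_mul hv hf hg huU
  have hHint := Measure.integrable_bind_map_of_norm_le (μ := μ₀) (ν := volume.restrict (Icc 0 T))
    (F := fun x₀ t ↦ (t, traj x₀ t)) hF hH.aestronglyMeasurable
    (measurableSet_Icc.prod hX.measurableSet) (htraj.mono fun x₀ hx₀ ↦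
      (ae_restrict_mem measurableSet_Icc).mono fun t ht ↦ ⟨ht, hx₀.2.2 t ht⟩) hC
  have hpath : ∀ᵐ x₀ ∂μ₀, ∫ t in Icc 0 T, (Lf n f v (t, traj x₀ t) +
      ∑ j, Lg n m g v (t, traj x₀ t) j * u (t, traj x₀ t) j) = v (T, traj x₀ T) - v (0, x₀) :=
    htraj.mono fun x₀ hx₀ ↦
      (hx₀.1.integral_Lf_add_sum_Lg_mul_eq_sub hT.le hv).trans (by rw [hx₀.2.1])
  rw [integral_map (f := fun y ↦ v (T, y)) hFT.aemeasurable
    (hv.continuous.comp (Continuous.prodMk_right T)).aestronglyMeasurable,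
    Measure.integral_bind_map hF hH.aestronglyMeasurable hHint, integral_congr_ae hpath,
    integral_sub hvT hv0]
  ring
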